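/- arXiv:0805.1414 — 8 statements merged into one kernel-verified Lean document; each statement's English description precedes it below -/
import Mathlib

section
/- Let R be a commutative ring and let f : M → N be an R-linear map between projective R-modules. If for some integer k ≥ 1 the induced map f^{⊗k} : M^{⊗k} → N^{⊗k} between the k-th tensor powers (taken over R) is surjective, then f itself is surjective. -/
/-!
Let `T ⊆ R` be the trace ideal of `N`, generated by the values `φ n` of linear functionals.
For functionals `φ₁, …, φⱼ`, the multilinear map `(n₁, …, nⱼ₊₁) ↦ ∏ φᵢ(nᵢ) • [nⱼ₊₁]` into
`N ⧸ range f` kills the image of `f^{⊗(j+1)}`, so surjectivity of the tensor power gives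
`T ^ j • N ⊆ range f`. A dual basis of the projective module `N` writes every element as
`∑ φₐ(n) • a`, so `T • N = N`, hence `T ^ j • N = N` and `f` is surjective.
-/

theorem Ideal.pow_smul_top_eq_top {R M : Type*} [CommSemiring R] [AddCommMonoid M] [Module R M]
    {I : Ideal R} (h : I • (⊤ : Submodule R M) = ⊤) (n : ℕ) : I ^ n • (⊤ : Submodule R M) = ⊤ := by
  induction n with
  | zero => simp
  | succ n ih => rw [pow_succ, Submodule.mul_smul, h, ih]

namespace Module

def traceIdeal (R N : Type*) [CommSemiring R] [AddCommMonoid N] [Module R N] : Ideal R :=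
  Ideal.span {r | ∃ (φ : Dual R N) (x : N), φ x = r}

theorem traceIdeal_smul_top {R N : Type*} [CommSemiring R] [AddCommMonoid N] [Module R N]
    [Projective R N] : traceIdeal R N • (⊤ : Submodule R N) = ⊤ := by
  obtain ⟨s, hs⟩ := projective_def.mp ‹Projective R N›
  refine top_unique fun y _ => ?_
  rw [← hs y, Finsupp.linearCombination_apply]
  refine Submodule.sum_mem _ fun a _ => Submodule.smul_mem_smul (Ideal.subset_span ?_) trivial
  exact ⟨Finsupp.lapply a ∘ₗ s, y, rfl⟩

variable {R M N : Type*} [CommRing R] [AddCommMonoid M] [Module R M] [AddCommGroup N] [Module R N]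

theorem prod_dual_apply_mem_colon_range {f : M →ₗ[R] N} {j : ℕ}
    (hf : Function.Surjective (PiTensorProduct.map fun _ : Fin (j + 1) => f))
    (φ : Fin j → Dual R N) (x : Fin j → N) :
    ∏ i, φ i (x i) ∈ (LinearMap.range f).colon Set.univ := by
  let F : MultilinearMap R (fun _ : Fin (j + 1) => N) (N ⧸ LinearMap.range f) :=
    (((MultilinearMap.mkPiAlgebra R (Fin j) R).compLinearMap φ).smulRight
      (LinearMap.range f).mkQ).uncurryRight
  have hF : PiTensorProduct.lift F ∘ₗ PiTensorProduct.map (fun _ => f) = 0 := by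
    ext m
    simp [F, MultilinearMap.uncurryRight_apply,
      (Submodule.Quotient.mk_eq_zero _).mpr (LinearMap.mem_range_self f _)]
  refine Submodule.mem_colon.mpr fun y _ => ?_
  obtain ⟨z, hz⟩ := hf (PiTensorProduct.tprod R (Fin.snoc x y))
  have hFy : PiTensorProduct.lift F (PiTensorProduct.tprod R (Fin.snoc x y)) = 0 := by
    rw [← hz, ← LinearMap.comp_apply, hF, LinearMap.zero_apply]
  simpa [F, MultilinearMap.uncurryRight_apply, ← Submodule.Quotient.mk_smul,
    Submodule.Quotient.mk_eq_zero] using hFy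

theorem traceIdeal_pow_le_colon_range {f : M →ₗ[R] N} {j : ℕ}
    (hf : Function.Surjective (PiTensorProduct.map fun _ : Fin (j + 1) => f)) :
    traceIdeal R N ^ j ≤ (LinearMap.range f).colon Set.univ := by
  rw [traceIdeal, Ideal.span, Submodule.span_pow, Ideal.span_le]
  intro r hr
  obtain ⟨g, rfl⟩ := Set.mem_pow.mp hr
  choose φ x hφx using fun i => (g i).2
  simpa [List.prod_ofFn, hφx] using prod_dual_apply_mem_colon_range hf φ x

end Module

theorem tensor_power_surjective_of_projective_general
    {R M N : Type*} [CommRing R] [AddCommGroup M] [Module R M]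
    [AddCommGroup N] [Module R N]
    (hN : Module.Projective R N)
    (f : M →ₗ[R] N) (k : ℕ) (hk : 1 ≤ k)
    (h : Function.Surjective (PiTensorProduct.map (fun _ : Fin k => f))) :
    Function.Surjective f := by
  obtain ⟨j, rfl⟩ := Nat.exists_eq_add_of_le' hk
  rw [← LinearMap.range_eq_top, eq_top_iff,
    ← Ideal.pow_smul_top_eq_top Module.traceIdeal_smul_top j]
  exact Submodule.smul_le.mpr fun r hr y _ =>
    Submodule.mem_colon.mp (Module.traceIdeal_pow_le_colon_range h hr) y trivial

/-- If `f : M → N` is an `R`-linear map between projective modules whose `k`-th tensor power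
(`k ≥ 1`) is surjective, then `f` is surjective. -/
theorem tensor_power_surjective_of_projective
    {R M N : Type*} [CommRing R] [AddCommGroup M] [Module R M]
    [AddCommGroup N] [Module R N]
    (hM : Module.Projective R M) (hN : Module.Projective R N)
    (f : M →ₗ[R] N) (k : ℕ) (hk : 1 ≤ k)
    (h : Function.Surjective (PiTensorProduct.map (fun _ : Fin k => f))) :
    Function.Surjective f :=
  tensor_power_surjective_of_projective_general hN f k hk h
end

section
/- Let p be a prime and A a ℤ/pℤ-graded commutative ring with components A_i. Let J ⊆ A be the ideal J = I ⊕ A_1 ⊕ ⋯ ⊕ A_{p−1}, where I = Σ_{i=1}^{p−1} A_i·A_{p−i} ⊆ A_0. Then for every integer k ≥ 1, the degree-0 component of J^k satisfies J^k ∩ A_0 = Σ_{i=1}^{p−1} A_i·(J^{k−1} ∩ A_{p−i}), with the convention J^0 = A. -/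
/-- The `k`-th power of an additive subgroup (`ℤ`-submodule) `J` of a commutative ring `A`,
with the convention that `J^0 = A` (the whole ring). -/
def subgroupPow {A : Type*} [CommRing A] (J : Submodule ℤ A) : ℕ → Submodule ℤ A
  | 0 => ⊤
  | n + 1 => J * subgroupPow J n

/-! A submodule `M` is homogeneous when `M ≤ ⨆ i, M ⊓ 𝒜 i`. By independence of the components,
the degree-`m` part of a product of homogeneous `M` and `N` is spanned by the products
`(M ⊓ 𝒜 a) * (N ⊓ 𝒜 b)` with `a + b = m`. Since `J` is homogeneous, so is every `J ^ n`, and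
the degree-zero part of `J * J ^ n` is spanned by `𝒜 a * (J ^ n ⊓ 𝒜 (-a))` for `a ≠ 0` together
with `(J ⊓ 𝒜 0) * (J ^ n ⊓ 𝒜 0) = I * (J ^ n ⊓ 𝒜 0)`. The latter is a sum of terms
`𝒜 a * (𝒜 (-a) * (J ^ n ⊓ 𝒜 0))`, already of the former kind because `J ^ n` is an ideal
(this is where the convention `J ^ 0 = A` matters). -/

section Decomposition

variable {ι R M : Type*} [DecidableEq ι] [Ring R] [AddCommGroup M] [Module R M]
  (ℳ : ι → Submodule R M) [DirectSum.Decomposition ℳ]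

theorem disjoint_biSup_ne_of_decomposition (i : ι) : Disjoint (ℳ i) (⨆ j ≠ i, ℳ j) :=
  (DirectSum.Decomposition.isInternal ℳ).submodule_iSupIndep.disjoint_biSup fun h => h rfl

theorem iSup_inf_le_of_le_decomposition {κ : Type*} (P : κ → Submodule R M) (deg : κ → ι)
    (hP : ∀ k, P k ≤ ℳ (deg k)) (m : ι) :
    (⨆ k, P k) ⊓ ℳ m ≤ ⨆ (k) (_ : deg k = m), P k := by
  have hdeg : ⨆ (k) (_ : deg k = m), P k ≤ ℳ m := iSup₂_le fun k hk => hk ▸ hP k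
  have hrest : (⨆ (k) (_ : ¬deg k = m), P k) ⊓ ℳ m = ⊥ :=
    (disjoint_biSup_ne_of_decomposition ℳ m).symm.mono_left
      (iSup₂_le fun k hk => le_iSup₂_of_le (deg k) hk (hP k)) |>.eq_bot
  rw [iSup_split P (fun k => deg k = m), sup_inf_assoc_of_le _ hdeg, hrest, sup_bot_eq]

theorem sup_iSup_ne_inf_eq_of_le_decomposition {N : Submodule R M} {i : ι} (hN : N ≤ ℳ i) :
    (N ⊔ ⨆ j ≠ i, ℳ j) ⊓ ℳ i = N := by
  rw [sup_inf_assoc_of_le _ hN, (disjoint_biSup_ne_of_decomposition ℳ i).symm.eq_bot, sup_bot_eq]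

end Decomposition

theorem mul_le_iSup_inf_mul_inf {ι R A : Type*} [CommSemiring R] [Semiring A] [Algebra R A]
    {𝒜 : ι → Submodule R A} {M N : Submodule R A} (hM : M ≤ ⨆ i, M ⊓ 𝒜 i)
    (hN : N ≤ ⨆ i, N ⊓ 𝒜 i) : M * N ≤ ⨆ ij : ι × ι, (M ⊓ 𝒜 ij.1) * (N ⊓ 𝒜 ij.2) := by
  calc M * N ≤ (⨆ i, M ⊓ 𝒜 i) * ⨆ j, N ⊓ 𝒜 j := mul_le_mul' hM hN
    _ = ⨆ ij : ι × ι, (M ⊓ 𝒜 ij.1) * (N ⊓ 𝒜 ij.2) := by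
      simp_rw [Submodule.iSup_mul, Submodule.mul_iSup, iSup_prod]

section GradedRing

variable {ι R A : Type*} [DecidableEq ι] [AddMonoid ι] [CommRing R] [Ring A] [Algebra R A]
  (𝒜 : ι → Submodule R A) [GradedRing 𝒜]

theorem mul_le_graded (i j : ι) : 𝒜 i * 𝒜 j ≤ 𝒜 (i + j) :=
  Submodule.mul_le.mpr fun _ hx _ hy => SetLike.mul_mem_graded hx hy

theorem top_le_iSup_inf_graded : (⊤ : Submodule R A) ≤ ⨆ i, ⊤ ⊓ 𝒜 i := by
  simp only [top_inf_eq, (DirectSum.Decomposition.isInternal 𝒜).submodule_iSup_eq_top, le_refl]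

variable {𝒜}

theorem mul_inf_graded_le_of_le_iSup {M N : Submodule R A} (hM : M ≤ ⨆ i, M ⊓ 𝒜 i)
    (hN : N ≤ ⨆ i, N ⊓ 𝒜 i) (m : ι) :
    M * N ⊓ 𝒜 m ≤ ⨆ (ij : ι × ι) (_ : ij.1 + ij.2 = m), (M ⊓ 𝒜 ij.1) * (N ⊓ 𝒜 ij.2) :=
  (inf_le_inf_right _ (mul_le_iSup_inf_mul_inf hM hN)).trans <|
    iSup_inf_le_of_le_decomposition 𝒜 (fun ij : ι × ι => (M ⊓ 𝒜 ij.1) * (N ⊓ 𝒜 ij.2))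
      (fun ij => ij.1 + ij.2)
      (fun ij => (mul_le_mul' inf_le_right inf_le_right).trans (mul_le_graded 𝒜 ij.1 ij.2)) m

theorem mul_le_iSup_inf_graded {M N : Submodule R A} (hM : M ≤ ⨆ i, M ⊓ 𝒜 i)
    (hN : N ≤ ⨆ i, N ⊓ 𝒜 i) : M * N ≤ ⨆ m, M * N ⊓ 𝒜 m :=
  (mul_le_iSup_inf_mul_inf hM hN).trans <| iSup_le fun ij =>
    le_iSup_of_le (ij.1 + ij.2) <| le_inf (mul_le_mul' inf_le_left inf_le_left)
      ((mul_le_mul' inf_le_right inf_le_right).trans (mul_le_graded 𝒜 _ _))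

end GradedRing

section SubgroupPow

variable {A : Type*} [CommRing A]

theorem mul_subgroupPow_le (M J : Submodule ℤ A) (n : ℕ) :
    M * subgroupPow J n ≤ subgroupPow J n := by
  induction n with
  | zero => exact le_top
  | succ n ih =>
    change M * (J * subgroupPow J n) ≤ J * subgroupPow J n
    rw [mul_left_comm]
    exact mul_le_mul' le_rfl ih

theorem subgroupPow_le_iSup_inf_graded {ι : Type*} [DecidableEq ι] [AddMonoid ι]
    {𝒜 : ι → Submodule ℤ A} [GradedRing 𝒜] {J : Submodule ℤ A} (hJ : J ≤ ⨆ i, J ⊓ 𝒜 i)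
    (n : ℕ) : subgroupPow J n ≤ ⨆ i, subgroupPow J n ⊓ 𝒜 i := by
  induction n with
  | zero => exact top_le_iSup_inf_graded 𝒜
  | succ n ih => exact mul_le_iSup_inf_graded hJ ih

end SubgroupPow

theorem le_iSup_inf_of_eq_sup {ι R M : Type*} [Zero ι] [Semiring R] [AddCommMonoid M]
    [Module R M] {ℳ : ι → Submodule R M} {I J : Submodule R M} (hI0 : I ≤ ℳ 0)
    (hJ : J = I ⊔ ⨆ a ≠ 0, ℳ a) :
    J ≤ ⨆ a, J ⊓ ℳ a := by
  have hIJ : I ≤ J := hJ ▸ le_sup_left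
  have hAJ : ∀ a ≠ 0, ℳ a ≤ J := fun a ha =>
    hJ ▸ le_sup_of_le_right (le_iSup₂_of_le a ha le_rfl)
  conv_lhs => rw [hJ]
  exact sup_le (le_iSup_of_le 0 (le_inf hIJ hI0))
    (iSup₂_le fun a ha => le_iSup_of_le a (le_inf (hAJ a ha) le_rfl))

section AugmentationIdeal

variable {ι A : Type*} [DecidableEq ι] [AddGroup ι] [CommRing A]
  {𝒜 : ι → Submodule ℤ A} [GradedRing 𝒜] {I J : Submodule ℤ A}

theorem le_graded_zero_of_eq_iSup_mul_neg (hI : I = ⨆ a ≠ 0, 𝒜 a * 𝒜 (-a)) : I ≤ 𝒜 0 :=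
  hI ▸ iSup₂_le fun a _ => (add_neg_cancel a) ▸ mul_le_graded 𝒜 a (-a)

theorem subgroupPow_succ_inf_graded_zero_le (hI : I = ⨆ a ≠ 0, 𝒜 a * 𝒜 (-a))
    (hJ : J = I ⊔ ⨆ a ≠ 0, 𝒜 a) (n : ℕ) :
    subgroupPow J (n + 1) ⊓ 𝒜 0 ≤ ⨆ a ≠ 0, 𝒜 a * (subgroupPow J n ⊓ 𝒜 (-a)) := by
  have hI0 := le_graded_zero_of_eq_iSup_mul_neg hI
  have hJ0 : J ⊓ 𝒜 0 ≤ I := (hJ ▸ sup_iSup_ne_inf_eq_of_le_decomposition 𝒜 hI0).le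
  have hJhom := le_iSup_inf_of_eq_sup hI0 hJ
  have hdeg0 : (J ⊓ 𝒜 0) * (subgroupPow J n ⊓ 𝒜 0) ≤
      ⨆ a ≠ 0, 𝒜 a * (subgroupPow J n ⊓ 𝒜 (-a)) :=
    calc (J ⊓ 𝒜 0) * (subgroupPow J n ⊓ 𝒜 0) ≤ I * (subgroupPow J n ⊓ 𝒜 0) :=
          mul_le_mul' hJ0 le_rfl
      _ = ⨆ a ≠ 0, 𝒜 a * (𝒜 (-a) * (subgroupPow J n ⊓ 𝒜 0)) := by
          simp_rw [hI, Submodule.iSup_mul, mul_assoc]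
      _ ≤ ⨆ a ≠ 0, 𝒜 a * (subgroupPow J n ⊓ 𝒜 (-a)) := by
          refine iSup₂_mono fun a _ => mul_le_mul' le_rfl (le_inf ?_ ?_)
          · exact (mul_le_mul' le_rfl inf_le_left).trans (mul_subgroupPow_le _ _ n)
          · exact (mul_le_mul' le_rfl inf_le_right).trans
              (by simpa only [add_zero] using mul_le_graded 𝒜 (-a) 0)
  refine (mul_inf_graded_le_of_le_iSup hJhom (subgroupPow_le_iSup_inf_graded hJhom n) 0).trans
    (iSup₂_le ?_)
  rintro ⟨a, b⟩ hab
  obtain rfl : b = -a := eq_neg_of_add_eq_zero_right hab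
  by_cases ha : a = 0
  · subst ha
    simpa only [neg_zero] using hdeg0
  · exact (mul_le_mul' inf_le_right le_rfl).trans (le_iSup₂_of_le a ha le_rfl)

theorem subgroupPow_succ_inf_graded_zero (hI : I = ⨆ a ≠ 0, 𝒜 a * 𝒜 (-a))
    (hJ : J = I ⊔ ⨆ a ≠ 0, 𝒜 a) (n : ℕ) :
    subgroupPow J (n + 1) ⊓ 𝒜 0 = ⨆ a ≠ 0, 𝒜 a * (subgroupPow J n ⊓ 𝒜 (-a)) := by
  refine le_antisymm (subgroupPow_succ_inf_graded_zero_le hI hJ n) (iSup₂_le fun a ha => ?_)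
  have hAJ : 𝒜 a ≤ J := hJ ▸ le_sup_of_le_right (le_iSup₂_of_le a ha le_rfl)
  exact le_inf (mul_le_mul' hAJ inf_le_left)
    ((mul_le_mul' le_rfl inf_le_right).trans (add_neg_cancel a ▸ mul_le_graded 𝒜 a (-a)))

end AugmentationIdeal

theorem natCast_ne_zero_and_natCast_sub_eq_neg {p i : ℕ} (hi : i ∈ Finset.Icc 1 (p - 1)) :
    (i : ZMod p) ≠ 0 ∧ ((p - i : ℕ) : ZMod p) = -(i : ZMod p) := by
  obtain ⟨hi1, hip⟩ := Finset.mem_Icc.mp hi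
  refine ⟨fun h => Nat.not_dvd_of_pos_of_lt hi1 (by omega) ((ZMod.natCast_eq_zero_iff i p).mp h),
    ?_⟩
  rw [Nat.cast_sub (by omega), ZMod.natCast_self, zero_sub]

theorem sum_Icc_natCast_sub_eq_iSup_ne_zero {R M : Type*} [Semiring R] [AddCommMonoid M]
    [Module R M] {p : ℕ} [NeZero p] (f : ZMod p → ZMod p → Submodule R M) :
    ∑ i ∈ Finset.Icc 1 (p - 1), f (i : ZMod p) ((p - i : ℕ) : ZMod p) = ⨆ a ≠ 0, f a (-a) := by
  change (Finset.Icc 1 (p - 1)).sup _ = _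
  rw [Finset.sup_eq_iSup]
  refine le_antisymm (iSup₂_le fun i hi => ?_) (iSup₂_le fun a ha => ?_)
  · obtain ⟨hi0, hneg⟩ := natCast_ne_zero_and_natCast_sub_eq_neg hi
    exact le_iSup₂_of_le (i : ZMod p) hi0 (hneg ▸ le_rfl)
  · have hval : a.val ∈ Finset.Icc 1 (p - 1) :=
      Finset.mem_Icc.mpr ⟨ZMod.val_pos.mpr ha, Nat.le_sub_one_of_lt (ZMod.val_lt a)⟩
    refine le_iSup₂_of_le a.val hval ?_
    rw [(natCast_ne_zero_and_natCast_sub_eq_neg hval).2, ZMod.natCast_zmod_val]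

/-- For a `ℤ/pℤ`-graded commutative ring `A` with components `𝒜 i`, letting
`I = Σ_{i=1}^{p-1} 𝒜 i · 𝒜 (p-i)` and `J = I + 𝒜 1 + ⋯ + 𝒜 (p-1)`, for every `k ≥ 1` the
degree-zero part of `J^k` equals `Σ_{i=1}^{p-1} 𝒜 i · (J^{k-1} ∩ 𝒜 (p-i))`
(with the convention `J^0 = A`). -/
theorem degree_zero_part_of_pow_aug_ideal
    {A : Type*} [CommRing A] {p : ℕ} (hp : p.Prime)
    (𝒜 : ZMod p → Submodule ℤ A) [GradedRing 𝒜]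
    (I J : Submodule ℤ A)
    (hI : I = ∑ i ∈ Finset.Icc 1 (p - 1), 𝒜 (i : ZMod p) * 𝒜 ((p - i : ℕ) : ZMod p))
    (hJ : J = I + ∑ i ∈ Finset.Icc 1 (p - 1), 𝒜 (i : ZMod p))
    (k : ℕ) (hk : 1 ≤ k) :
    subgroupPow J k ⊓ 𝒜 (0 : ZMod p) =
      ∑ i ∈ Finset.Icc 1 (p - 1),
        𝒜 (i : ZMod p) * (subgroupPow J (k - 1) ⊓ 𝒜 ((p - i : ℕ) : ZMod p)) := by
  have : NeZero p := ⟨hp.ne_zero⟩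
  obtain ⟨n, rfl⟩ : ∃ n, k = n + 1 := ⟨k - 1, by omega⟩
  rw [sum_Icc_natCast_sub_eq_iSup_ne_zero fun a b => 𝒜 a * 𝒜 b] at hI
  rw [sum_Icc_natCast_sub_eq_iSup_ne_zero fun a _ => 𝒜 a, Submodule.add_eq_sup] at hJ
  rw [Nat.add_sub_cancel,
    sum_Icc_natCast_sub_eq_iSup_ne_zero fun a b => 𝒜 a * (subgroupPow J n ⊓ 𝒜 b)]
  exact subgroupPow_succ_inf_graded_zero hI hJ n
end

section
/- Let p be a prime and A a ℤ/pℤ-graded commutative ring with components A_i. Suppose that Σ_{i=1}^{p−1} A_i·A_{p−i} = A_0. Then for every d ∈ {1, …, p−1}, the additive subgroup of A generated by all p-fold products a_1⋯a_p with each a_j ∈ A_d equals A_0 (that is, A_d^p = A_0). -/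
/-!
Put `Z = 𝒜 0` and `I = 𝒜 d ^ p`. Then `I ⊆ Z` and `Z * I ⊆ I`, so it suffices to show `1 ∈ I`.
For `i ≠ 0` write `d = k i`; then `(𝒜 i * 𝒜 (-i)) ^ ((p - 1) k)` factors as `(𝒜 i ^ k) ^ (p - 1)`
times a submodule of degree `d`, hence lies in `I`. The hypothesis writes `1` as a sum of elements
`x_i ∈ 𝒜 i * 𝒜 (-i) ⊆ Z`, each of which has a power in the ideal `I ∩ Z` of the ring `Z`; so `1`
lies in the radical of that ideal, hence in the ideal itself.
-/

namespace Submodule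

variable {R A : Type*} [CommSemiring R] [CommSemiring A] [Algebra R A]

theorem le_of_one_le_sum_of_pow_le {ι : Type*} {Z I : Submodule R A} (hZ1 : 1 ≤ Z)
    (hZZ : Z * Z ≤ Z) (hZI : Z * I ≤ I) {s : Finset ι} {f : ι → Submodule R A}
    (hfZ : ∀ i ∈ s, f i ≤ Z) (hfI : ∀ i ∈ s, ∃ n, f i ^ n ≤ I) (hf1 : 1 ≤ ∑ i ∈ s, f i) : Z ≤ I := by
  let S : Subalgebra R A := Z.toSubalgebra (one_le.1 hZ1) fun _ _ hx hy => hZZ (mul_mem_mul hx hy)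
  let J : Ideal S :=
    { carrier := {x | (x : A) ∈ I}
      add_mem' := I.add_mem
      zero_mem' := I.zero_mem
      smul_mem' := fun c _ hx => hZI (mul_mem_mul c.2 hx) }
  let K : Submodule R A := (J.radical.restrictScalars R).map S.val.toLinearMap
  have hfK : ∀ i ∈ s, f i ≤ K := fun i hi x hx => by
    obtain ⟨n, hn⟩ := hfI i hi
    exact ⟨⟨x, hfZ i hi hx⟩, ⟨n, hn (pow_mem_pow _ hx n)⟩, rfl⟩
  have hsK : ∑ i ∈ s, f i ≤ K :=
    Finset.sum_induction f (· ≤ K) (fun _ _ => add_le) bot_le hfK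
  obtain ⟨y, hy, hy1⟩ := hsK (hf1 (one_le.1 le_rfl))
  obtain rfl : y = 1 := Subtype.ext hy1
  have h1I : (1 : A) ∈ I := J.eq_top_iff_one.1 (J.radical_eq_top.1 (J.radical.eq_top_iff_one.2 hy))
  calc Z = Z * 1 := (mul_one Z).symm
    _ ≤ Z * I := mul_le_mul_right (one_le.2 h1I) Z
    _ ≤ I := hZI

variable {ι : Type*} (𝒜 : ι → Submodule R A)

section AddMonoid

variable [AddMonoid ι] [SetLike.GradedMonoid 𝒜]

theorem one_le_graded : 1 ≤ 𝒜 0 :=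
  one_le.2 (SetLike.one_mem_graded 𝒜)

theorem mul_le_graded (i j : ι) : 𝒜 i * 𝒜 j ≤ 𝒜 (i + j) :=
  mul_le.2 fun _ ha _ hb => SetLike.mul_mem_graded ha hb

theorem pow_le_graded (i : ι) (n : ℕ) : 𝒜 i ^ n ≤ 𝒜 (n • i) := by
  induction n with
  | zero => simpa using one_le_graded 𝒜
  | succ n ih =>
    rw [pow_succ, succ_nsmul]
    exact (mul_le_mul' ih le_rfl).trans (mul_le_graded 𝒜 _ _)

theorem graded_zero_mul_pow_le (i : ι) {n : ℕ} (hn : n ≠ 0) : 𝒜 0 * 𝒜 i ^ n ≤ 𝒜 i ^ n := by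
  obtain ⟨n, rfl⟩ := Nat.exists_eq_succ_of_ne_zero hn
  rw [pow_succ, mul_left_comm]
  exact mul_le_mul_right (by simpa using mul_le_graded 𝒜 0 i) _

end AddMonoid

theorem graded_mul_neg_pow_le_pow [AddCommGroup ι] [SetLike.GradedMonoid 𝒜] (i : ι) {n k N : ℕ}
    (hn : (n + 1) • k • i = 0) (hN : n * k ≤ N) :
    (𝒜 i * 𝒜 (-i)) ^ N ≤ 𝒜 (k • i) ^ (n + 1) := by
  obtain ⟨M, rfl⟩ := Nat.exists_eq_add_of_le hN
  have hdeg : M • i + (n * k + M) • -i = k • i := by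
    rw [succ_nsmul] at hn
    rw [smul_neg, add_nsmul, mul_nsmul']
    linear_combination (norm := module) -hn
  calc (𝒜 i * 𝒜 (-i)) ^ (n * k + M) = (𝒜 i ^ k) ^ n * (𝒜 i ^ M * 𝒜 (-i) ^ (n * k + M)) := by
        ring
    _ ≤ 𝒜 (k • i) ^ n * 𝒜 (M • i + (n * k + M) • -i) :=
        mul_le_mul' (pow_le_pow_left' (pow_le_graded 𝒜 i k) n)
          ((mul_le_mul' (pow_le_graded 𝒜 _ _) (pow_le_graded 𝒜 _ _)).trans (mul_le_graded 𝒜 _ _))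
    _ = 𝒜 (k • i) ^ (n + 1) := by rw [hdeg, pow_succ]

theorem exists_graded_mul_neg_pow_le_pow {p : ℕ} [Fact p.Prime] (𝒜 : ZMod p → Submodule R A)
    [SetLike.GradedMonoid 𝒜] {i : ZMod p} (hi : i ≠ 0) (d : ZMod p) :
    ∃ N, (𝒜 i * 𝒜 (-i)) ^ N ≤ 𝒜 d ^ p := by
  have hp : p - 1 + 1 = p := Nat.sub_add_cancel (Fact.out : p.Prime).one_le
  have hd : (d / i).val • i = d := by
    rw [nsmul_eq_mul, ZMod.natCast_zmod_val, div_mul_cancel₀ d hi]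
  refine ⟨(p - 1) * (d / i).val, ?_⟩
  have := graded_mul_neg_pow_le_pow 𝒜 i (n := p - 1) (k := (d / i).val) (by simp [hp]) le_rfl
  rwa [hd, hp] at this

end Submodule

/-- For a `ℤ/pℤ`-graded commutative ring `A` with components `𝒜 i` such that
`Σ_{i=1}^{p-1} 𝒜 i · 𝒜 (p-i) = 𝒜 0`, for every `d ∈ {1, …, p-1}` the additive subgroup
generated by `p`-fold products of elements of `𝒜 d` equals `𝒜 0`, i.e. `(𝒜 d)^p = 𝒜 0`. -/
theorem component_pow_eq_degree_zero
    {A : Type*} [CommRing A] {p : ℕ} (hp : p.Prime)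
    (𝒜 : ZMod p → Submodule ℤ A) [GradedRing 𝒜]
    (h : ∑ i ∈ Finset.Icc 1 (p - 1), 𝒜 (i : ZMod p) * 𝒜 ((p - i : ℕ) : ZMod p)
        = 𝒜 (0 : ZMod p)) :
    ∀ d ∈ Finset.Icc 1 (p - 1), 𝒜 (d : ZMod p) ^ p = 𝒜 (0 : ZMod p) := by
  have := Fact.mk hp
  have hIcc : ∀ i ∈ Finset.Icc 1 (p - 1),
      (i : ZMod p) ≠ 0 ∧ ((p - i : ℕ) : ZMod p) = -(i : ZMod p) := fun i hi => by
    obtain ⟨hi1, hip⟩ := Finset.mem_Icc.1 hi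
    refine ⟨?_, by rw [Nat.cast_sub (by omega), ZMod.natCast_self, zero_sub]⟩
    rw [Ne, ZMod.natCast_eq_zero_iff]
    exact Nat.not_dvd_of_pos_of_lt hi1 (by omega)
  intro d _
  refine le_antisymm (by simpa using Submodule.pow_le_graded 𝒜 (d : ZMod p) p) ?_
  refine Submodule.le_of_one_le_sum_of_pow_le (Submodule.one_le_graded 𝒜)
    (by simpa using Submodule.mul_le_graded 𝒜 0 0)
    (Submodule.graded_zero_mul_pow_le 𝒜 _ hp.ne_zero) (fun i hi => ?_) (fun i hi => ?_)
    (h ▸ Submodule.one_le_graded 𝒜)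
  · simpa [(hIcc i hi).2] using Submodule.mul_le_graded 𝒜 (i : ZMod p) (-i)
  · simpa [(hIcc i hi).2] using Submodule.exists_graded_mul_neg_pow_le_pow 𝒜 (hIcc i hi).1 _
end

section
/- Let p be a prime and A a ℤ/pℤ-graded commutative ring with components A_i. Suppose that A_k·A_{p−k} = A_0 for each k = 1, …, p−1. Then for all k, l ∈ ℤ/pℤ the multiplication map A_k ⊗_{A_0} A_l → A_{k+l}, a ⊗ b ↦ ab, is injective. -/
lemma exists_sum_of_mem_mul {A : Type*} [CommRing A] {S T : Submodule ℤ A} {z : A}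
    (hz : z ∈ S * T) :
    ∃ (n : ℕ) (x y : Fin n → A), (∀ i, x i ∈ S) ∧ (∀ i, y i ∈ T) ∧ ∑ i, x i * y i = z := by
  refine Submodule.mul_induction_on hz ?_ ?_
  · intro m hm t ht
    exact ⟨1, fun _ => m, fun _ => t, fun _ => hm, fun _ => ht, by simp⟩
  · rintro a b ⟨n, xa, ya, hxa, hya, rfl⟩ ⟨m, xb, yb, hxb, hyb, rfl⟩
    refine ⟨n + m, Fin.append xa xb, Fin.append ya yb, ?_, ?_, ?_⟩
    · intro i
      refine Fin.addCases (fun j => ?_) (fun j => ?_) i <;>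
        simp [Fin.append_left, Fin.append_right, hxa, hxb]
    · intro i
      refine Fin.addCases (fun j => ?_) (fun j => ?_) i <;>
        simp [Fin.append_left, Fin.append_right, hya, hyb]
    · rw [Fin.sum_univ_add]
      simp [Fin.append_left, Fin.append_right]

open scoped TensorProduct

section GradedSetup

variable {A : Type*} [CommRing A] {p : ℕ}
variable (𝒜 : ZMod p → Submodule ℤ A) [GradedRing 𝒜]

/-- Each component `𝒜 i` is a module over the degree-zero subring `𝒜 0`,
with scalar multiplication induced by the ring multiplication. -/
instance gradeZeroModule (i : ZMod p) : Module (𝒜 (0 : ZMod p)) (𝒜 i) where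
  smul r x := ⟨(r : A) * (x : A), by
    have h := SetLike.mul_mem_graded r.2 x.2
    rwa [zero_add] at h⟩
  one_smul x := Subtype.ext (one_mul _)
  mul_smul r s x := Subtype.ext (mul_assoc _ _ _)
  smul_zero r := Subtype.ext (mul_zero _)
  smul_add r x y := Subtype.ext (mul_add _ _ _)
  add_smul r s x := Subtype.ext (add_mul _ _ _)
  zero_smul x := Subtype.ext (zero_mul _)

/-- The multiplication map `𝒜 k ⊗[𝒜 0] 𝒜 l → 𝒜 (k + l)`, `a ⊗ b ↦ ab`. -/
noncomputable def gradedMulMap (k l : ZMod p) :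
    (𝒜 k) ⊗[↥(𝒜 (0 : ZMod p))] (𝒜 l) →ₗ[↥(𝒜 (0 : ZMod p))] (𝒜 (k + l)) :=
  TensorProduct.lift (LinearMap.mk₂ (𝒜 (0 : ZMod p))
    (fun a b => ⟨(a : A) * (b : A), SetLike.mul_mem_graded a.2 b.2⟩)
    (fun _ _ _ => Subtype.ext (add_mul _ _ _))
    (fun _ _ _ => Subtype.ext (mul_assoc _ _ _))
    (fun _ _ _ => Subtype.ext (mul_add _ _ _))
    (fun _ _ _ => Subtype.ext (mul_left_comm _ _ _)))

end GradedSetup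

/-- If `𝒜 i · 𝒜 (p-i) = 𝒜 0` for each `i = 1, …, p-1`, then for all `k, l ∈ ℤ/pℤ` the
multiplication map `𝒜 k ⊗[𝒜 0] 𝒜 l → 𝒜 (k+l)` is injective. -/
theorem gradedMulMap_injective
    {A : Type*} [CommRing A] {p : ℕ} (hp : p.Prime)
    (𝒜 : ZMod p → Submodule ℤ A) [GradedRing 𝒜]
    (h : ∀ i ∈ Finset.Icc 1 (p - 1),
      𝒜 (i : ZMod p) * 𝒜 ((p - i : ℕ) : ZMod p) = 𝒜 (0 : ZMod p)) :
    ∀ k l : ZMod p, Function.Injective (gradedMulMap 𝒜 k l) := by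
  haveI : Fact p.Prime := ⟨hp⟩
  intro k l
  obtain ⟨n, x, y, hx, hy, hxy⟩ : ∃ (n : ℕ) (x y : Fin n → A),
      (∀ i, x i ∈ 𝒜 k) ∧ (∀ i, y i ∈ 𝒜 (-k)) ∧ ∑ i, x i * y i = 1 := by
    by_cases hk : k = 0
    · subst hk
      refine ⟨1, fun _ => 1, fun _ => 1, fun _ => SetLike.one_mem_graded 𝒜, fun _ => ?_, by simp⟩
      rw [neg_zero]; exact SetLike.one_mem_graded 𝒜
    · have hkk : ((k.val : ℕ) : ZMod p) = k := ZMod.natCast_rightInverse k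
      have hnk : ((p - k.val : ℕ) : ZMod p) = -k := by
        rw [Nat.cast_sub (ZMod.val_lt k).le, ZMod.natCast_self, hkk, zero_sub]
      have h1 : (1 : A) ∈ 𝒜 k * 𝒜 (-k) := by
        have hm := h k.val (Finset.mem_Icc.2 ⟨?_, ?_⟩)
        · rw [hkk, hnk] at hm
          rw [hm]; exact SetLike.one_mem_graded 𝒜
        · exact Nat.one_le_iff_ne_zero.2 (fun h0 => hk (by rw [← hkk, h0, Nat.cast_zero]))
        · exact Nat.le_sub_one_of_lt (ZMod.val_lt k)
      exact exists_sum_of_mem_mul h1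
  have hmem : ∀ (i : Fin n) (z : A), z ∈ 𝒜 (k + l) → y i * z ∈ 𝒜 l := by
    intro i z hz
    have := SetLike.mul_mem_graded (hy i) hz
    rwa [neg_add_cancel_left] at this
  have key : ∀ t : (𝒜 k) ⊗[↥(𝒜 (0 : ZMod p))] (𝒜 l),
      (∑ i, (⟨x i, hx i⟩ : 𝒜 k) ⊗ₜ[↥(𝒜 (0 : ZMod p))]
        (⟨y i * (gradedMulMap 𝒜 k l t : A), hmem i _ (gradedMulMap 𝒜 k l t).2⟩ : 𝒜 l)) = t := by
    intro t
    induction t using TensorProduct.induction_on with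
    | zero =>
      have hz : ∀ i : Fin n,
          (⟨y i * ((gradedMulMap 𝒜 k l 0 : 𝒜 (k + l)) : A),
            hmem i _ (gradedMulMap 𝒜 k l 0).2⟩ : 𝒜 l) = 0 := by
        intro i; apply Subtype.ext; simp
      simp only [hz, TensorProduct.tmul_zero, Finset.sum_const_zero]
    | add t1 t2 h1 h2 =>
      rw [map_add]
      have : ∀ i : Fin n,
          (⟨y i * ((gradedMulMap 𝒜 k l t1 + gradedMulMap 𝒜 k l t2 : 𝒜 (k + l)) : A),
              hmem i _ (gradedMulMap 𝒜 k l t1 + gradedMulMap 𝒜 k l t2).2⟩ : 𝒜 l)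
          = ⟨y i * (gradedMulMap 𝒜 k l t1 : A), hmem i _ (gradedMulMap 𝒜 k l t1).2⟩
            + ⟨y i * (gradedMulMap 𝒜 k l t2 : A), hmem i _ (gradedMulMap 𝒜 k l t2).2⟩ := by
        intro i
        apply Subtype.ext
        simp [mul_add]
      simp_rw [this, TensorProduct.tmul_add, Finset.sum_add_distrib, h1, h2]
    | tmul a b =>
      have hμ : ((gradedMulMap 𝒜 k l (a ⊗ₜ b) : 𝒜 (k + l)) : A) = (a : A) * (b : A) := by
        simp [gradedMulMap]
      have h0 : ∀ i : Fin n, y i * (a : A) ∈ 𝒜 (0 : ZMod p) := by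
        intro i
        have := SetLike.mul_mem_graded (hy i) a.2
        rwa [neg_add_cancel] at this
      have step : ∀ i : Fin n,
          (⟨x i, hx i⟩ : 𝒜 k) ⊗ₜ[↥(𝒜 (0 : ZMod p))]
            (⟨y i * ((gradedMulMap 𝒜 k l (a ⊗ₜ b) : 𝒜 (k + l)) : A),
              hmem i _ (gradedMulMap 𝒜 k l (a ⊗ₜ b)).2⟩ : 𝒜 l)
          = ((⟨y i * (a : A) * (x i), by
                have := SetLike.mul_mem_graded (h0 i) (hx i); rwa [zero_add] at this⟩ : 𝒜 k))
              ⊗ₜ[↥(𝒜 (0 : ZMod p))] b := by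
        intro i
        have e1 : (⟨y i * ((gradedMulMap 𝒜 k l (a ⊗ₜ b) : 𝒜 (k + l)) : A),
              hmem i _ (gradedMulMap 𝒜 k l (a ⊗ₜ b)).2⟩ : 𝒜 l)
            = (⟨y i * (a : A), h0 i⟩ : 𝒜 (0 : ZMod p)) • b := by
          apply Subtype.ext
          show y i * _ = y i * (a : A) * (b : A)
          rw [hμ, mul_assoc]
        rw [e1, ← TensorProduct.smul_tmul]
        congr 1
      rw [Finset.sum_congr rfl (fun i _ => step i), ← TensorProduct.sum_tmul]
      have : (∑ i, (⟨y i * (a : A) * (x i), by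
                have := SetLike.mul_mem_graded (h0 i) (hx i); rwa [zero_add] at this⟩ : 𝒜 k))
          = a := by
        apply Subtype.ext
        push_cast
        rw [Finset.sum_congr rfl (fun i _ => by ring_nf : ∀ i ∈ Finset.univ,
          y i * (a : A) * x i = (a : A) * (x i * y i))]
        rw [← Finset.mul_sum, hxy, mul_one]
      rw [this]
  intro t t' htt'
  rw [← key t, ← key t', htt']
end

section
/- Let p be a prime and A a ℤ/pℤ-graded commutative ring with components A_i. Suppose that A_i^p = A_0 for all i = 1, …, p−1 and that A_i·A_{p−i} = A_0 for each i = 1, …, p−1. Then for every d ∈ {1, …, p−1}, the p-fold multiplication map A_d ⊗_{A_0} ⋯ ⊗_{A_0} A_d → A_0 (p tensor factors), a_1 ⊗ ⋯ ⊗ a_p ↦ a_1⋯a_p, is bijective. -/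
open scoped TensorProduct

/-!
Write `μ` for the multiplication map. Since `1 ∈ 𝒜 0 = (𝒜 d)^p`, some tensor `T` has
`μ T = 1`. Inside the commutative ring `A` the arguments of two pure tensors can be exchanged
one coordinate at a time, which gives `μ t • s = μ s • t` for all tensors `s, t`. Taking
`s = T` yields `t = μ t • T`, so `μ` is injective, and `μ (a • T) = a` makes it surjective.
-/

section GradedSetup

variable {A : Type*} [CommRing A] {p : ℕ}
variable (𝒜 : ZMod p → Submodule ℤ A) [GradedRing 𝒜]

private theorem update_prod_key {d : ZMod p} [DecidableEq (Fin p)]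
    (m : Fin p → 𝒜 d) (i : Fin p) (v : 𝒜 d) :
    (∏ j, ((Function.update m i v j : 𝒜 d) : A))
      = (v : A) * ∏ j ∈ Finset.univ \ {i}, ((m j : A)) :=
  calc (∏ j, ((Function.update m i v j : 𝒜 d) : A))
      = ∏ j, Function.update (fun k => ((m k : A))) i (v : A) j :=
        Finset.prod_congr rfl fun j _ =>
          Function.apply_update (fun _ w => ((w : 𝒜 d) : A)) m i v j
    _ = (v : A) * ∏ j ∈ Finset.univ \ {i}, ((m j : A)) :=
        Finset.prod_update_of_mem (Finset.mem_univ i) _ _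

/-- The `p`-fold multiplication, as a multilinear map
`𝒜 d × ⋯ × 𝒜 d → 𝒜 0`, `(a_1, …, a_p) ↦ a_1 ⋯ a_p`. -/
def pfoldMulMultilinear (d : ZMod p) :
    MultilinearMap (𝒜 (0 : ZMod p)) (fun _ : Fin p => 𝒜 d) (𝒜 (0 : ZMod p)) where
  toFun x := ⟨∏ i, ((x i : A)), by
    have h := SetLike.prod_mem_graded 𝒜 (fun _ : Fin p => d) (fun i => ((x i : A)))
      (F := Finset.univ) (fun i _ => (x i).2)
    simpa [Finset.sum_const, Finset.card_univ, nsmul_eq_mul, ZMod.natCast_self] using h⟩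
  map_update_add' m i x y := Subtype.ext <| by
    show (∏ j, ((Function.update m i (x + y) j : 𝒜 d) : A))
        = (∏ j, ((Function.update m i x j : 𝒜 d) : A))
          + (∏ j, ((Function.update m i y j : 𝒜 d) : A))
    rw [update_prod_key, update_prod_key, update_prod_key, AddMemClass.coe_add, add_mul]
  map_update_smul' m i r x := Subtype.ext <| by
    show (∏ j, ((Function.update m i (r • x) j : 𝒜 d) : A))
        = (r : A) * (∏ j, ((Function.update m i x j : 𝒜 d) : A))
    rw [update_prod_key, update_prod_key]
    show ((r : A) * (x : A)) * _ = (r : A) * ((x : A) * _)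
    rw [mul_assoc]

end GradedSetup

theorem LinearMap.bijective_of_smul_comm {R N : Type*} [CommSemiring R] [AddCommMonoid N]
    [Module R N] (L : N →ₗ[R] R) (hL : ∀ t s, L t • s = L s • t) (T : N) (hT : L T = 1) :
    Function.Bijective L := by
  have h_eq : ∀ t, t = L t • T := fun t => by rw [hL, hT, one_smul]
  refine ⟨fun t₁ t₂ h => by rw [h_eq t₁, h_eq t₂, h], fun a => ⟨a • T, ?_⟩⟩
  rw [map_smul, hT, smul_eq_mul, mul_one]

namespace MultilinearMap

variable {R ι M : Type*} [CommSemiring R] [AddCommMonoid M] [Module R M]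

theorem smul_tprod_comm_of_update [Fintype ι] [DecidableEq ι]
    (f : MultilinearMap R (fun _ : ι => M) R)
    (hf : ∀ m i x y, f (Function.update m i y) • x = f (Function.update m i x) • y)
    (m b : ι → M) :
    f m • PiTensorProduct.tprod R b = f b • PiTensorProduct.tprod R m := by
  suffices h : ∀ s : Finset ι,
      f (s.piecewise b m) • PiTensorProduct.tprod R (s.piecewise m b)
        = f m • PiTensorProduct.tprod R b by
    simpa only [Finset.piecewise_univ] using (h Finset.univ).symm
  intro s
  induction s using Finset.induction_on with
  | empty => simp only [Finset.piecewise_empty]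
  | insert a s ha ih =>
    rw [Finset.piecewise_insert, Finset.piecewise_insert,
      ← MultilinearMap.map_update_smul, hf, MultilinearMap.map_update_smul,
      Function.update_eq_self_iff.mpr (Finset.piecewise_eq_of_notMem _ _ _ ha).symm,
      Function.update_eq_self_iff.mpr (Finset.piecewise_eq_of_notMem _ _ _ ha).symm, ih]

theorem lift_smul_comm (f : MultilinearMap R (fun _ : ι => M) R)
    (hf : ∀ m b, f m • PiTensorProduct.tprod R b = f b • PiTensorProduct.tprod R m)
    (t s : ⨂[R] _ : ι, M) :
    PiTensorProduct.lift f t • s = PiTensorProduct.lift f s • t := by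
  induction t using PiTensorProduct.induction_on with
  | smul_tprod r m =>
    induction s using PiTensorProduct.induction_on with
    | smul_tprod r' b =>
      simp only [map_smul, PiTensorProduct.lift.tprod, smul_eq_mul, mul_smul]
      rw [smul_comm (f m) r', smul_comm r r', hf m b, smul_comm (f b) r]
    | add x y hx hy => rw [map_add, add_smul, smul_add, hx, hy]
  | add x y hx hy => rw [map_add, add_smul, smul_add, hx, hy]

end MultilinearMap

theorem Submodule.pow_eq_span_prod {A : Type*} [CommSemiring A] {R : Type*} [CommSemiring R]
    [Algebra R A] (M : Submodule R A) (n : ℕ) :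
    M ^ n = Submodule.span R {y | ∃ f : Fin n → M, ∏ i, (f i : A) = y} := by
  rw [Submodule.pow_eq_span_pow_set]
  congr 1
  ext y
  simp only [Set.mem_pow, List.prod_ofFn, Set.mem_ofPred_eq]
  rfl

section PfoldMul

variable {A : Type*} [CommRing A] {p : ℕ}
variable (𝒜 : ZMod p → Submodule ℤ A) [GradedRing 𝒜]

theorem pfoldMulMultilinear_update_smul_comm (d : ZMod p) (m : Fin p → 𝒜 d) (i : Fin p)
    (x y : 𝒜 d) :
    pfoldMulMultilinear 𝒜 d (Function.update m i y) • x
      = pfoldMulMultilinear 𝒜 d (Function.update m i x) • y := by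
  apply Subtype.ext
  change (∏ j, ((Function.update m i y j : 𝒜 d) : A)) * x
    = (∏ j, ((Function.update m i x j : 𝒜 d) : A)) * y
  rw [update_prod_key, update_prod_key]
  ring

theorem exists_lift_pfoldMulMultilinear_eq (d : ZMod p) {a : A} (ha : a ∈ 𝒜 d ^ p) :
    ∃ t, (PiTensorProduct.lift (pfoldMulMultilinear 𝒜 d) t : A) = a := by
  rw [Submodule.pow_eq_span_prod] at ha
  induction ha using Submodule.span_induction with
  | mem y hy =>
    obtain ⟨f, rfl⟩ := hy
    exact ⟨PiTensorProduct.tprod _ f, by rw [PiTensorProduct.lift.tprod]; rfl⟩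
  | zero => exact ⟨0, by simp⟩
  | add x y _ _ hx hy =>
    obtain ⟨t, rfl⟩ := hx
    obtain ⟨s, rfl⟩ := hy
    exact ⟨t + s, by simp⟩
  | smul n x _ hx =>
    obtain ⟨t, rfl⟩ := hx
    exact ⟨n • t, by rw [map_zsmul, Submodule.coe_smul]⟩

end PfoldMul

theorem pfold_mul_bijective_general
    {A : Type*} [CommRing A] {p : ℕ}
    (𝒜 : ZMod p → Submodule ℤ A) [GradedRing 𝒜]
    (hpow : ∀ i ∈ Finset.Icc 1 (p - 1), 𝒜 (i : ZMod p) ^ p = 𝒜 (0 : ZMod p)) :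
    ∀ d ∈ Finset.Icc 1 (p - 1),
      Function.Bijective (PiTensorProduct.lift (pfoldMulMultilinear 𝒜 (d : ZMod p))) := by
  intro d hd
  have h_one : (1 : A) ∈ 𝒜 (d : ZMod p) ^ p := by
    rw [hpow d hd]
    exact SetLike.one_mem_graded 𝒜
  obtain ⟨T, hT⟩ := exists_lift_pfoldMulMultilinear_eq 𝒜 _ h_one
  exact LinearMap.bijective_of_smul_comm _
    ((pfoldMulMultilinear 𝒜 _).lift_smul_comm
      ((pfoldMulMultilinear 𝒜 _).smul_tprod_comm_of_update
        (pfoldMulMultilinear_update_smul_comm 𝒜 _)))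
    T (Subtype.ext hT)

/-- If `(𝒜 i)^p = 𝒜 0` and `𝒜 i · 𝒜 (p-i) = 𝒜 0` for all `i = 1, …, p-1`, then for every
`d ∈ {1, …, p-1}` the `p`-fold multiplication map
`𝒜 d ⊗[𝒜 0] ⋯ ⊗[𝒜 0] 𝒜 d → 𝒜 0`, `a_1 ⊗ ⋯ ⊗ a_p ↦ a_1⋯a_p`, is bijective. -/
theorem pfold_mul_bijective
    {A : Type*} [CommRing A] {p : ℕ} (hp : p.Prime)
    (𝒜 : ZMod p → Submodule ℤ A) [GradedRing 𝒜]
    (hpow : ∀ i ∈ Finset.Icc 1 (p - 1), 𝒜 (i : ZMod p) ^ p = 𝒜 (0 : ZMod p))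
    (hmul : ∀ i ∈ Finset.Icc 1 (p - 1),
      𝒜 (i : ZMod p) * 𝒜 ((p - i : ℕ) : ZMod p) = 𝒜 (0 : ZMod p)) :
    ∀ d ∈ Finset.Icc 1 (p - 1),
      Function.Bijective (PiTensorProduct.lift (pfoldMulMultilinear 𝒜 (d : ZMod p))) :=
  pfold_mul_bijective_general 𝒜 hpow
end

section
/- Let p be a prime and A a ℤ/pℤ-graded commutative ring with components A_i such that A_i·A_{p−i} = A_0 for each i = 1, …, p−1. Let K be a homogeneous ideal of A, and let K_0 = K ∩ A_0, an ideal of the subring A_0. Then for every integer n ≥ 1, the degree-0 component of K^n equals the n-th power of K_0: K^n ∩ A_0 = K_0^n. -/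
/-!
The hypothesis gives `1 ∈ A_i A_{-i}` for every `i`, i.e. the grading is strong. Writing
`1 = ∑ u_r v_r` with `u_r ∈ A_i`, `v_r ∈ A_{-i}`, a product `ab` of homogeneous `a ∈ I ∩ A_i` and
`b ∈ J ∩ A_{-i}` becomes `∑ (a v_r)(b u_r)`, a sum of products of elements of `I_0` and `J_0`.
Since the degree-zero part of `ab` for arbitrary `a ∈ I`, `b ∈ J` is a sum of such products,
`(IJ)_0 = I_0 J_0` for homogeneous `I`, `J`, and the theorem follows by induction on `n`.
-/

open DirectSum

theorem Ideal.IsHomogeneous.pow {ι A : Type*} [DecidableEq ι] [AddMonoid ι] [CommSemiring A]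
    {σ : Type*} [SetLike σ A] [AddSubmonoidClass σ A] {𝒜 : ι → σ} [GradedRing 𝒜]
    {I : Ideal A} (hI : I.IsHomogeneous 𝒜) (n : ℕ) : (I ^ n).IsHomogeneous 𝒜 := by
  induction n with
  | zero => simpa only [pow_zero, Ideal.one_eq_top] using Ideal.IsHomogeneous.top 𝒜
  | succ n ih => rw [pow_succ]; exact ih.mul hI

namespace GradedRing

variable {ι A : Type*} [AddCommGroup ι] [DecidableEq ι] [CommRing A]
  (𝒜 : ι → Submodule ℤ A) [GradedRing 𝒜]

local notation "𝒜₀" => SetLike.GradeZero.subring 𝒜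

theorem restrictScalars_inf_eq_map_comap (I : Ideal A) :
    I.restrictScalars ℤ ⊓ 𝒜 0 =
      ((I.comap (𝒜₀).subtype).restrictScalars ℤ).map (𝒜₀).subtype.toIntAlgHom.toLinearMap := by
  ext x
  constructor
  · rintro ⟨hxI, hx⟩
    exact ⟨⟨x, hx⟩, hxI, rfl⟩
  · rintro ⟨t, ht, rfl⟩
    exact ⟨ht, t.2⟩

theorem mem_comap_mul_of_coe_mem {I J : Ideal A} {t : 𝒜₀}
    (ht : (t : A) ∈ (I.restrictScalars ℤ ⊓ 𝒜 0) * (J.restrictScalars ℤ ⊓ 𝒜 0)) :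
    t ∈ I.comap (𝒜₀).subtype * J.comap (𝒜₀).subtype := by
  rw [restrictScalars_inf_eq_map_comap, restrictScalars_inf_eq_map_comap, ← Submodule.map_mul,
    ← Ideal.restrictScalars_mul] at ht
  obtain ⟨s, hs, hst⟩ := ht
  rwa [← Subtype.ext hst]

variable {𝒜}

theorem mul_mem_mul_of_mem_neg (hA : ∀ i, (1 : A) ∈ 𝒜 i * 𝒜 (-i)) {I J : Ideal A} {i : ι}
    {a b : A} (haI : a ∈ I) (ha : a ∈ 𝒜 i) (hbJ : b ∈ J) (hb : b ∈ 𝒜 (-i)) :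
    a * b ∈ (I.restrictScalars ℤ ⊓ 𝒜 0) * (J.restrictScalars ℤ ⊓ 𝒜 0) := by
  suffices 𝒜 i * 𝒜 (-i) ≤ ((I.restrictScalars ℤ ⊓ 𝒜 0) * (J.restrictScalars ℤ ⊓ 𝒜 0)).comap
      (LinearMap.mulLeft ℤ (a * b)) by
    simpa only [Submodule.mem_comap, LinearMap.mulLeft_apply, mul_one] using this (hA i)
  refine Submodule.mul_le.2 fun u hu v hv => ?_
  rw [Submodule.mem_comap, LinearMap.mulLeft_apply,
    show a * b * (u * v) = (a * v) * (b * u) by ring]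
  exact Submodule.mul_mem_mul
    ⟨I.mul_mem_right v haI, by simpa using SetLike.mul_mem_graded ha hv⟩
    ⟨J.mul_mem_right u hbJ, by simpa using SetLike.mul_mem_graded hb hu⟩

theorem coe_decompose_zero_mem_mul (hA : ∀ i, (1 : A) ∈ 𝒜 i * 𝒜 (-i)) {I J : Ideal A}
    (hI : I.IsHomogeneous 𝒜) (hJ : J.IsHomogeneous 𝒜) {x : A} (hx : x ∈ I * J) :
    (decompose 𝒜 x 0 : A) ∈ (I.restrictScalars ℤ ⊓ 𝒜 0) * (J.restrictScalars ℤ ⊓ 𝒜 0) := by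
  classical
  refine Submodule.mul_induction_on hx (fun a haI b hbJ => ?_) fun x y hx hy => ?_
  · rw [decompose_mul, coe_mul_apply]
    refine Submodule.sum_mem _ fun ij hij => ?_
    obtain ⟨-, hij⟩ := Finset.mem_filter.1 hij
    rw [← neg_eq_of_add_eq_zero_right hij]
    exact mul_mem_mul_of_mem_neg hA (hI ij.1 haI) (SetLike.coe_mem _) (hJ _ hbJ)
      (SetLike.coe_mem _)
  · rw [decompose_add, DirectSum.add_apply, Submodule.coe_add]
    exact add_mem hx hy

theorem comap_gradeZero_subtype_mul (hA : ∀ i, (1 : A) ∈ 𝒜 i * 𝒜 (-i)) {I J : Ideal A}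
    (hI : I.IsHomogeneous 𝒜) (hJ : J.IsHomogeneous 𝒜) :
    (I * J).comap (𝒜₀).subtype = I.comap (𝒜₀).subtype * J.comap (𝒜₀).subtype := by
  refine le_antisymm (fun t ht => mem_comap_mul_of_coe_mem 𝒜 ?_) (Ideal.le_comap_mul _)
  simpa only [Subring.coe_subtype, decompose_of_mem_same 𝒜 t.2] using
    coe_decompose_zero_mem_mul hA hI hJ ht

end GradedRing

theorem ZMod.one_mem_graded_mul_neg {A : Type*} [CommRing A] {p : ℕ} [NeZero p]
    (𝒜 : ZMod p → Submodule ℤ A) [SetLike.GradedMonoid 𝒜]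
    (h : ∀ i ∈ Finset.Icc 1 (p - 1), 𝒜 (i : ZMod p) * 𝒜 ((p - i : ℕ) : ZMod p) = 𝒜 0)
    (d : ZMod p) : (1 : A) ∈ 𝒜 d * 𝒜 (-d) := by
  rcases eq_or_ne d 0 with rfl | hd
  · simpa only [neg_zero, mul_one] using
      Submodule.mul_mem_mul (SetLike.one_mem_graded 𝒜) (SetLike.one_mem_graded 𝒜)
  have hval : d.val ∈ Finset.Icc 1 (p - 1) :=
    Finset.mem_Icc.2 ⟨Nat.one_le_iff_ne_zero.2 ((ZMod.val_ne_zero d).2 hd),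
      Nat.le_sub_one_of_lt d.val_lt⟩
  have hneg : ((p - d.val : ℕ) : ZMod p) = -d := by
    rw [Nat.cast_sub d.val_le, ZMod.natCast_self, ZMod.natCast_zmod_val, zero_sub]
  have hprod := h _ hval
  rw [ZMod.natCast_zmod_val, hneg] at hprod
  rw [hprod]
  exact SetLike.one_mem_graded 𝒜

theorem degree_zero_component_of_pow_homogeneous_ideal_general
    {A : Type*} [CommRing A] {p : ℕ} (hp : p.Prime)
    (𝒜 : ZMod p → Submodule ℤ A) [GradedRing 𝒜]
    (h : ∀ i ∈ Finset.Icc 1 (p - 1),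
      𝒜 (i : ZMod p) * 𝒜 ((p - i : ℕ) : ZMod p) = 𝒜 (0 : ZMod p))
    (K : Ideal A) (hK : Ideal.IsHomogeneous 𝒜 K) (n : ℕ) :
    Ideal.comap (SetLike.GradeZero.subring 𝒜).subtype (K ^ n)
      = (Ideal.comap (SetLike.GradeZero.subring 𝒜).subtype K) ^ n := by
  have : NeZero p := ⟨hp.ne_zero⟩
  have hA := ZMod.one_mem_graded_mul_neg 𝒜 h
  induction n with
  | zero => simp
  | succ n ih =>
    rw [pow_succ, GradedRing.comap_gradeZero_subtype_mul hA (hK.pow n) hK, ih, pow_succ]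

/-- For a `ℤ/pℤ`-graded commutative ring `A` with `𝒜 i · 𝒜 (p-i) = 𝒜 0` for `i = 1, …, p-1`
and a homogeneous ideal `K ⊆ A`, the degree-zero component of `K^n` (`n ≥ 1`) equals the
`n`-th power of the ideal `K₀ = K ∩ 𝒜 0` of the subring `𝒜 0`. -/
theorem degree_zero_component_of_pow_homogeneous_ideal
    {A : Type*} [CommRing A] {p : ℕ} (hp : p.Prime)
    (𝒜 : ZMod p → Submodule ℤ A) [GradedRing 𝒜]
    (h : ∀ i ∈ Finset.Icc 1 (p - 1),
      𝒜 (i : ZMod p) * 𝒜 ((p - i : ℕ) : ZMod p) = 𝒜 (0 : ZMod p))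
    (K : Ideal A) (hK : Ideal.IsHomogeneous 𝒜 K) (n : ℕ) (hn : 1 ≤ n) :
    Ideal.comap (SetLike.GradeZero.subring 𝒜).subtype (K ^ n)
      = (Ideal.comap (SetLike.GradeZero.subring 𝒜).subtype K) ^ n :=
  degree_zero_component_of_pow_homogeneous_ideal_general hp 𝒜 h K hK n
end

section
/- Let p be a prime and A a ℤ/pℤ-graded commutative ring with components A_i such that A_i·A_{p−i} = A_0 for each i = 1, …, p−1. Let K be a homogeneous ideal of A, write K_i = K ∩ A_i, and let n ≥ 1 and j_1, …, j_n ∈ ℤ/pℤ with j_1 + ⋯ + j_n = 0. Then every product x_1 x_2 ⋯ x_n with x_m ∈ K_{j_m} for each m lies in (K_0)^n, the n-th power of the ideal K_0 = K ∩ A_0 of the subring A_0. -/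
/-- For a `ℤ/pℤ`-graded commutative ring `A` with `𝒜 i · 𝒜 (p-i) = 𝒜 0` for `i = 1, …, p-1`,
a homogeneous ideal `K ⊆ A`, and degrees `j_1, …, j_n` summing to `0` in `ℤ/pℤ`, every product
`x_1 ⋯ x_n` with `x_m ∈ K ∩ 𝒜 (j_m)` lies in `(K₀)^n`, where `K₀ = K ∩ 𝒜 0` is an ideal of
the subring `𝒜 0`. -/
theorem prod_mem_pow_degree_zero_ideal
    {A : Type*} [CommRing A] {p : ℕ} (hp : p.Prime)
    (𝒜 : ZMod p → Submodule ℤ A) [GradedRing 𝒜]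
    (h : ∀ i ∈ Finset.Icc 1 (p - 1),
      𝒜 (i : ZMod p) * 𝒜 ((p - i : ℕ) : ZMod p) = 𝒜 (0 : ZMod p))
    (K : Ideal A) (hK : Ideal.IsHomogeneous 𝒜 K)
    (n : ℕ) (hn : 1 ≤ n) (j : Fin n → ZMod p) (hj : ∑ m, j m = 0)
    (x : Fin n → A) (hx : ∀ m, x m ∈ K ∧ x m ∈ 𝒜 (j m)) :
    ∃ y ∈ (Ideal.comap (SetLike.GradeZero.subring 𝒜).subtype K) ^ n,
      (y : A) = ∏ m, x m := by
  classical
  haveI : NeZero p := ⟨hp.ne_zero⟩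
  set I : Ideal (SetLike.GradeZero.subring 𝒜) :=
    Ideal.comap (SetLike.GradeZero.subring 𝒜).subtype K with hIdef
  -- the predicate
  let P : ℕ → A → Prop := fun n z => ∃ y ∈ I ^ n, (y : A) = z
  -- closure properties
  have hadd : ∀ (n : ℕ) (z w : A), P n z → P n w → P n (z + w) := by
    rintro n z w ⟨y, hy, rfl⟩ ⟨y', hy', rfl⟩
    exact ⟨y + y', Ideal.add_mem _ hy hy', rfl⟩
  have hmul : ∀ (m k : ℕ) (z w : A), P m z → P k w → P (m + k) (z * w) := by
    rintro m k z w ⟨y, hy, rfl⟩ ⟨y', hy', rfl⟩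
    exact ⟨y * y', by rw [pow_add]; exact Ideal.mul_mem_mul hy hy', rfl⟩
  have hone : ∀ z : A, z ∈ K → z ∈ 𝒜 0 → P 1 z := by
    intro z hzK hz0
    refine ⟨⟨z, hz0⟩, ?_, rfl⟩
    rw [pow_one, hIdef, Ideal.mem_comap]
    exact hzK
  -- unit in the product of opposite-degree components
  have hunit : ∀ d : ZMod p, d ≠ 0 → (1 : A) ∈ 𝒜 (-d) * 𝒜 d := by
    intro d hd
    have hdne : (-d) ≠ 0 := by simpa using hd
    set i : ℕ := (-d).val with hi
    have hival : ((i : ℕ) : ZMod p) = -d := by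
      simp [hi, ZMod.natCast_val, ZMod.cast_id]
    have hi1 : 1 ≤ i := by
      rcases Nat.eq_zero_or_pos i with h0 | h0
      · exfalso; apply hdne
        have := hival
        rw [h0] at this
        simpa using this.symm
      · exact h0
    have hilt : i < p := ZMod.val_lt (-d)
    have hi2 : i ≤ p - 1 := by omega
    have hcast : ((p - i : ℕ) : ZMod p) = d := by
      have : ((p - i : ℕ) : ZMod p) = (p : ZMod p) - (i : ZMod p) :=
        Nat.cast_sub (le_of_lt hilt)
      rw [this, hival]
      simp
    have := h i (Finset.mem_Icc.mpr ⟨hi1, hi2⟩)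
    rw [hival, hcast] at this
    rw [this]
    exact SetLike.one_mem_graded 𝒜
  -- main induction
  have main : ∀ n : ℕ, 1 ≤ n → ∀ j : Fin n → ZMod p, ∑ m, j m = 0 →
      ∀ x : Fin n → A, (∀ m, x m ∈ K ∧ x m ∈ 𝒜 (j m)) → P n (∏ m, x m) := by
    intro n
    induction n with
    | zero => omega
    | succ n ih =>
      intro _ j hj x hx
      cases n with
      | zero =>
        have hj0 : j 0 = 0 := by simpa using hj
        have := hx 0
        rw [hj0] at this
        have h1 := hone (x 0) this.1 this.2
        simpa using h1
      | succ m =>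
        by_cases h0 : j 0 = 0
        · -- first factor already in degree 0
          have hx0 := hx 0
          rw [h0] at hx0
          have h1 := hone (x 0) hx0.1 hx0.2
          have hsum : ∑ k : Fin (m + 1), j k.succ = 0 := by
            rw [Fin.sum_univ_succ, h0, zero_add] at hj
            exact hj
          have h2 := ih (by omega) (fun k => j k.succ) hsum (fun k => x k.succ)
            (fun k => hx k.succ)
          have h3 := hmul 1 (m + 1) _ _ h1 h2
          have hnn : 1 + (m + 1) = m + 1 + 1 := by omega
          rw [hnn] at h3
          rw [Fin.prod_univ_succ]
          exact h3
        · -- use 1 ∈ 𝒜 (-(j 0)) * 𝒜 (j 0)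
          have hu := hunit (j 0) h0
          have key : ∀ c ∈ 𝒜 (-(j 0)) * 𝒜 (j 0),
              P (m + 2) (x 0 * c * ∏ k : Fin (m + 1), x k.succ) := by
            intro c hc
            refine Submodule.mul_induction_on hc ?_ ?_
            · intro a ha b hb
              -- regroup: (x 0 * a) * ((b * x 1) * rest)
              have hx0a : P 1 (x 0 * a) := by
                refine hone _ (K.mul_mem_right a (hx 0).1) ?_
                have := SetLike.mul_mem_graded (hx 0).2 ha
                rwa [add_neg_cancel] at this
              -- inner list
              set j' : Fin (m + 1) → ZMod p :=
                Fin.cases (j 0 + j 1) (fun k => j k.succ.succ) with hj'def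
              set x' : Fin (m + 1) → A :=
                Fin.cases (b * x 1) (fun k => x k.succ.succ) with hx'def
              have hsum' : ∑ k, j' k = 0 := by
                rw [Fin.sum_univ_succ]
                rw [Fin.sum_univ_succ, Fin.sum_univ_succ] at hj
                simp only [hj'def, Fin.cases_zero, Fin.cases_succ]
                have h01 : j (Fin.succ 0) = j 1 := rfl
                rw [h01] at hj
                rw [add_assoc]
                exact hj
              have hx' : ∀ k, x' k ∈ K ∧ x' k ∈ 𝒜 (j' k) := by
                intro k
                refine Fin.cases ?_ ?_ k
                · simp only [hj'def, hx'def, Fin.cases_zero]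
                  exact ⟨K.mul_mem_left b (hx 1).1, SetLike.mul_mem_graded hb (hx 1).2⟩
                · intro k
                  simp only [hj'def, hx'def, Fin.cases_succ]
                  exact hx k.succ.succ
              have hrest := ih (by omega) j' hsum' x' hx'
              have hprod : ∏ k, x' k = (b * x 1) * ∏ k : Fin m, x k.succ.succ := by
                rw [Fin.prod_univ_succ]
                simp [hx'def]
              rw [hprod] at hrest
              have := hmul 1 (m + 1) _ _ hx0a hrest
              have heq : x 0 * (a * b) * ∏ k : Fin (m + 1), x k.succ =
                  (x 0 * a) * ((b * x 1) * ∏ k : Fin m, x k.succ.succ) := by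
                rw [Fin.prod_univ_succ]
                have h01 : x (Fin.succ 0) = x 1 := rfl
                rw [h01]
                ring
              rw [heq]
              have hnn : 1 + (m + 1) = m + 2 := by omega
              rw [hnn] at this
              exact this
            · intro c c' hc hc'
              have heq : x 0 * (c + c') * ∏ k : Fin (m + 1), x k.succ =
                  x 0 * c * ∏ k : Fin (m + 1), x k.succ +
                  x 0 * c' * ∏ k : Fin (m + 1), x k.succ := by ring
              rw [heq]
              exact hadd _ _ _ hc hc'
          have := key 1 hu
          rw [mul_one] at this
          rw [Fin.prod_univ_succ]
          exact this
  exact main n hn j hj x hx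
end

section
/- Let p be a prime and A a ℤ/pℤ-graded commutative ring with components A_i such that A_i·A_{p−i} = A_0 for each i = 1, …, p−1. Then each component A_i is a finitely generated projective A_0-module, and A is a faithfully flat A_0-module. -/
section GradedSetup

variable {A : Type*} [CommRing A] {p : ℕ}
variable (𝒜 : ZMod p → Submodule ℤ A) [GradedRing 𝒜]

/-- The inclusion of the degree-zero subring `𝒜 0` into `A`, as a ring homomorphism. -/
def gradeZeroInclusion : (𝒜 (0 : ZMod p)) →+* A where
  toFun x := x
  map_one' := rfl
  map_mul' _ _ := rfl
  map_zero' := rfl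
  map_add' _ _ := rfl

/-- `A` is an algebra (in particular a module) over its degree-zero subring `𝒜 0`. -/
noncomputable instance : Algebra (𝒜 (0 : ZMod p)) A := (gradeZeroInclusion 𝒜).toAlgebra

end GradedSetup

/- Writing `1 = ∑ x_j y_j` with `x_j ∈ A_i`, `y_j ∈ A_{-i}`, the maps `a ↦ (y_j a)_j` and
`r ↦ ∑ r_j x_j` exhibit `A_i` as a direct summand of `A_0^n`. So `A = ⊕ A_i` is projective, hence
flat, over `A_0`; it is faithfully flat because the degree-zero projection `A → A_0` is a surjective
`A_0`-linear map, so `I • A = A` forces `I = A_0`. -/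

theorem Submodule.exists_fin_sum_mul_eq_of_mem_mul {R A : Type*} [CommSemiring R] [Semiring A]
    [Algebra R A] {M N : Submodule R A} {a : A} (ha : a ∈ M * N) :
    ∃ (n : ℕ) (x y : Fin n → A), (∀ j, x j ∈ M) ∧ (∀ j, y j ∈ N) ∧ ∑ j, x j * y j = a := by
  refine Submodule.mul_induction_on ha (fun m hm n hn => ⟨1, ![m], ![n], ?_, ?_, ?_⟩) ?_
  · simpa using hm
  · simpa using hn
  · simp
  rintro a b ⟨n, x, y, hx, hy, rfl⟩ ⟨m, x', y', hx', hy', rfl⟩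
  refine ⟨n + m, Fin.append x x', Fin.append y y', Fin.addCases ?_ ?_, Fin.addCases ?_ ?_, ?_⟩
  all_goals simp [Fin.sum_univ_add, hx, hy, hx', hy']

theorem Module.FaithfullyFlat.of_surjective {R M : Type*} [CommRing R] [AddCommGroup M]
    [Module R M] [Module.Flat R M] (f : M →ₗ[R] R) (hf : Function.Surjective f) :
    Module.FaithfullyFlat R M := by
  refine (Module.FaithfullyFlat.iff_flat_and_proper_ideal R M).mpr
    ⟨inferInstance, fun I hI hIM => hI ?_⟩
  have := congrArg (Submodule.map f) hIM
  rwa [Submodule.map_smul'', Submodule.map_top, LinearMap.range_eq_top.mpr hf,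
    Ideal.smul_eq_mul, Ideal.mul_top] at this

section ZModGraded

variable {A : Type*} [CommRing A] {p : ℕ} (𝒜 : ZMod p → Submodule ℤ A) [GradedRing 𝒜]

theorem one_mem_mul_neg_of_mul_eq_gradeZero [NeZero p]
    (h : ∀ i ∈ Finset.Icc 1 (p - 1),
      𝒜 (i : ZMod p) * 𝒜 ((p - i : ℕ) : ZMod p) = 𝒜 (0 : ZMod p)) (i : ZMod p) :
    (1 : A) ∈ 𝒜 i * 𝒜 (-i) := by
  obtain rfl | hi := eq_or_ne i 0
  · simpa using Submodule.mul_mem_mul (SetLike.one_mem_graded 𝒜) (SetLike.one_mem_graded 𝒜)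
  have hval : i.val ∈ Finset.Icc 1 (p - 1) :=
    Finset.mem_Icc.mpr ⟨Nat.one_le_iff_ne_zero.mpr (ZMod.val_ne_zero i |>.mpr hi),
      Nat.le_sub_one_of_lt i.val_lt⟩
  have hneg : ((p - i.val : ℕ) : ZMod p) = -i := by
    rw [Nat.cast_sub i.val_lt.le, ZMod.natCast_self, ZMod.natCast_zmod_val, zero_sub]
  have := h i.val hval
  rw [ZMod.natCast_zmod_val, hneg] at this
  exact this ▸ SetLike.one_mem_graded 𝒜

variable {𝒜}

def mulHomogeneous {y : A} {i j k : ZMod p} (hy : y ∈ 𝒜 j) (hk : j + i = k) :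
    𝒜 i →ₗ[𝒜 0] 𝒜 k where
  toFun a := ⟨y * a, hk ▸ SetLike.mul_mem_graded hy a.2⟩
  map_add' _ _ := Subtype.ext (mul_add _ _ _)
  map_smul' _ _ := Subtype.ext (mul_left_comm _ _ _)

theorem finite_projective_of_one_mem_mul {i : ZMod p} (h : (1 : A) ∈ 𝒜 i * 𝒜 (-i)) :
    Module.Finite (𝒜 0) (𝒜 i) ∧ Module.Projective (𝒜 0) (𝒜 i) := by
  obtain ⟨n, x, y, hx, hy, hxy⟩ := Submodule.exists_fin_sum_mul_eq_of_mem_mul h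
  let s : (Fin n → 𝒜 0) →ₗ[𝒜 0] 𝒜 i := Fintype.linearCombination (𝒜 0) fun j => ⟨x j, hx j⟩
  let c : 𝒜 i →ₗ[𝒜 0] (Fin n → 𝒜 0) :=
    LinearMap.pi fun j => mulHomogeneous (hy j) (neg_add_cancel i)
  have hsc : s ∘ₗ c = LinearMap.id := by
    ext a
    calc ((s (c a) : 𝒜 i) : A) = ∑ j, y j * a * x j := by
          simp only [s, Fintype.linearCombination_apply, Submodule.coe_sum]
          rfl
      _ = a := by
          simp_rw [mul_right_comm _ (a : A), mul_comm (y _) (x _), ← Finset.sum_mul, hxy, one_mul]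
  exact ⟨.of_surjective s (Function.RightInverse.surjective (LinearMap.congr_fun hsc)),
    .of_split c s hsc⟩

variable (𝒜)

def decomposeGradeZeroLinearEquiv : A ≃ₗ[𝒜 0] DirectSum (ZMod p) fun i => 𝒜 i where
  __ := DirectSum.decomposeAddEquiv 𝒜
  map_smul' r a := by
    ext i
    change (DirectSum.decompose 𝒜 ((r : A) * a) i : A) = r * (DirectSum.decompose 𝒜 a i : A)
    rw [← DirectSum.coe_decompose_mul_add_of_left_mem 𝒜 r.2, zero_add]

theorem faithfullyFlat_gradeZero [∀ i, Module.Flat (𝒜 0) (𝒜 i)] :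
    Module.FaithfullyFlat (𝒜 0) A := by
  have := Module.Flat.of_linearEquiv (decomposeGradeZeroLinearEquiv 𝒜)
  refine .of_surjective
    (DirectSum.component (𝒜 0) _ _ 0 ∘ₗ (decomposeGradeZeroLinearEquiv 𝒜).toLinearMap)
    fun r => ⟨r, Subtype.ext (DirectSum.decompose_of_mem_same 𝒜 r.2)⟩

end ZModGraded

/-- If `𝒜 i · 𝒜 (p-i) = 𝒜 0` for each `i = 1, …, p-1`, then each component `𝒜 i` is a
finitely generated projective `𝒜 0`-module and `A` is a faithfully flat `𝒜 0`-module. -/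
theorem graded_components_projective_and_faithfully_flat
    {A : Type*} [CommRing A] {p : ℕ} (hp : p.Prime)
    (𝒜 : ZMod p → Submodule ℤ A) [GradedRing 𝒜]
    (h : ∀ i ∈ Finset.Icc 1 (p - 1),
      𝒜 (i : ZMod p) * 𝒜 ((p - i : ℕ) : ZMod p) = 𝒜 (0 : ZMod p)) :
    (∀ i : ZMod p,
      Module.Finite (𝒜 (0 : ZMod p)) (𝒜 i) ∧ Module.Projective (𝒜 (0 : ZMod p)) (𝒜 i)) ∧
    Module.FaithfullyFlat (𝒜 (0 : ZMod p)) A := by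
  have : NeZero p := ⟨hp.ne_zero⟩
  have hfp (i : ZMod p) :=
    finite_projective_of_one_mem_mul (one_mem_mul_neg_of_mul_eq_gradeZero 𝒜 h i)
  have (i : ZMod p) := (hfp i).2
  exact ⟨hfp, faithfullyFlat_gradeZero 𝒜⟩
end
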